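/- arXiv:2002.08252 — 3 statements merged into one kernel-verified Lean document; each statement's English description precedes it below -/
import Mathlib

section
/- Let Ω ⊊ ℂ be a domain asymptotically starlike at infinity and z ∈ Ω. Then: (1) τ_z ≠ 0; (2) if δ_Ω(z) > 1/2 then τ_z < 0; (3) if τ_z > 0 then there exists p ∈ ℂ \ Ω with Re p = Re z and |z − p| ≤ 1/2. -/
open Set Filter Complex MeasureTheory

noncomputable section

/-- The open unit disc in `ℂ`. -/
def unitDisc : Set ℂ := {z : ℂ | ‖z‖ < 1}

/-- A (plane) domain: a nonempty open connected subset of `ℂ`. -/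
def IsPlaneDomain (D : Set ℂ) : Prop := IsOpen D ∧ IsConnected D

/-- A hyperbolic domain: a domain whose complement contains at least two points. -/
def IsHypDomain (D : Set ℂ) : Prop :=
  IsPlaneDomain D ∧ ∃ p q : ℂ, p ∉ D ∧ q ∉ D ∧ p ≠ q

/-- Hyperbolic (Kobayashi) norm of the vector `v` at the point `z` of `D`:
`κ_D(z;v) = inf {|v|/|f'(0)| : f : 𝔻 → D holomorphic, f 0 = z}`. -/
def hypNorm (D : Set ℂ) (z v : ℂ) : ℝ :=
  sInf {r : ℝ | ∃ f : ℂ → ℂ, DifferentiableOn ℂ f unitDisc ∧ Set.MapsTo f unitDisc D ∧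
    f 0 = z ∧ deriv f 0 ≠ 0 ∧ r = ‖v‖ / ‖deriv f 0‖}

/-- Hyperbolic length of the curve `γ` on `[s,t]` in `D`. -/
def hypLength (D : Set ℂ) (γ : ℝ → ℂ) (s t : ℝ) : ℝ :=
  ∫ τ in s..t, hypNorm D (γ τ) (deriv γ τ)

/-- Piecewise `C¹`: continuous on `[a,b]` and differentiable off a finite set. -/
def PiecewiseC1On (γ : ℝ → ℂ) (a b : ℝ) : Prop :=
  ContinuousOn γ (Set.Icc a b) ∧
    ∃ S : Finset ℝ, ∀ x ∈ Set.Icc a b, x ∉ S → DifferentiableAt ℝ γ x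

/-- The hyperbolic distance `k_D(z,w)` in `D`: infimum of hyperbolic lengths of piecewise `C¹`
curves in `D` joining `z` to `w`. -/
def hypDist (D : Set ℂ) (z w : ℂ) : ℝ :=
  sInf {r : ℝ | ∃ γ : ℝ → ℂ, PiecewiseC1On γ 0 1 ∧ (∀ τ ∈ Set.Icc (0:ℝ) 1, γ τ ∈ D) ∧
    γ 0 = z ∧ γ 1 = w ∧ r = hypLength D γ 0 1}

/-- The hyperbolic distance from a point to a set. -/
def hypDistSet (D : Set ℂ) (z : ℂ) (S : Set ℂ) : ℝ :=
  sInf {r : ℝ | ∃ w ∈ S, r = hypDist D z w}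

/-- The hyperbolic ball `B_D(z,R)`. -/
def hypBall (D : Set ℂ) (z : ℂ) (R : ℝ) : Set ℂ := {w ∈ D | hypDist D z w < R}

/-- Absolutely continuous curve on a set (fundamental theorem of calculus characterization). -/
def ACOn (γ : ℝ → ℂ) (I : Set ℝ) : Prop :=
  ContinuousOn γ I ∧ ∀ a ∈ I, ∀ b ∈ I, a ≤ b → γ b - γ a = ∫ τ in a..b, deriv γ τ

/-- A geodesic of `D` defined on `I`. -/
def IsGeodesicOn (D : Set ℂ) (γ : ℝ → ℂ) (I : Set ℝ) : Prop :=
  ACOn γ I ∧ (∀ t ∈ I, γ t ∈ D) ∧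
    ∀ s ∈ I, ∀ t ∈ I, s ≤ t → hypLength D γ s t = hypDist D (γ s) (γ t)

/-- An `(A,B)`-quasi-geodesic of `D` defined on `I`. -/
def IsQuasiGeodesicOn (D : Set ℂ) (γ : ℝ → ℂ) (I : Set ℝ) : Prop :=
  ∃ A B : ℝ, 1 ≤ A ∧ 0 ≤ B ∧ ACOn γ I ∧ (∀ t ∈ I, γ t ∈ D) ∧
    ∀ s ∈ I, ∀ t ∈ I, s ≤ t → hypLength D γ s t ≤ A * hypDist D (γ s) (γ t) + B

/-- Gromov hyperbolicity of `(D, k_D)` via the Rips thin-triangles condition. -/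
def IsGromovHyperbolic (D : Set ℂ) : Prop :=
  IsHypDomain D ∧ ∃ G : ℝ, 0 < G ∧
    ∀ γ₁ γ₂ γ₃ : ℝ → ℂ,
      IsGeodesicOn D γ₁ (Set.Icc 0 1) → IsGeodesicOn D γ₂ (Set.Icc 0 1) →
      IsGeodesicOn D γ₃ (Set.Icc 0 1) →
      γ₁ 0 = γ₂ 0 → γ₁ 1 = γ₃ 0 → γ₂ 1 = γ₃ 1 →
      (∀ t ∈ Set.Icc (0:ℝ) 1,
          hypDistSet D (γ₁ t) (γ₂ '' Set.Icc 0 1 ∪ γ₃ '' Set.Icc 0 1) ≤ G) ∧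
      (∀ t ∈ Set.Icc (0:ℝ) 1,
          hypDistSet D (γ₂ t) (γ₁ '' Set.Icc 0 1 ∪ γ₃ '' Set.Icc 0 1) ≤ G) ∧
      (∀ t ∈ Set.Icc (0:ℝ) 1,
          hypDistSet D (γ₃ t) (γ₁ '' Set.Icc 0 1 ∪ γ₂ '' Set.Icc 0 1) ≤ G)

/-- A domain is asymptotically starlike at infinity if `Ω + i ⊆ Ω` and
`⋃ₙ (Ω - in) = (a,b) × ℝ` for some `-∞ ≤ a < b ≤ +∞`. -/
def AsympStarlike (Ω : Set ℂ) : Prop :=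
  (∀ z ∈ Ω, z + Complex.I ∈ Ω) ∧
  ∃ a b : EReal, a < b ∧
    (⋃ n : ℕ, (fun z => z - (n : ℂ) * Complex.I) '' Ω) =
      {z : ℂ | a < (z.re : EReal) ∧ (z.re : EReal) < b}

/-- Asymptotically starlike at infinity of parabolic type: `a = -∞` or `b = +∞`. -/
def AsympStarlikeParabolic (Ω : Set ℂ) : Prop :=
  (∀ z ∈ Ω, z + Complex.I ∈ Ω) ∧
  ∃ a b : EReal, a < b ∧ (a = ⊥ ∨ b = ⊤) ∧
    (⋃ n : ℕ, (fun z => z - (n : ℂ) * Complex.I) '' Ω) =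
      {z : ℂ | a < (z.re : EReal) ∧ (z.re : EReal) < b}

/-- `τ_z = inf {s ∈ ℝ : z + ir ∈ Ω for all r > s}`, computed in `EReal`. -/
def tauZ (Ω : Set ℂ) (z : ℂ) : EReal :=
  sInf {s : EReal | ∃ x : ℝ, s = (x : EReal) ∧ ∀ r : ℝ, x < r → z + (r : ℂ) * Complex.I ∈ Ω}

/-- The starlike-fication `Ω* = {z ∈ Ω : τ_z < 0}`. -/
def starlikefication (Ω : Set ℂ) : Set ℂ := {z ∈ Ω | tauZ Ω z < 0}

/-- The Euclidean distance to the complement, `δ_Ω`. -/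
def deltaO (Ω : Set ℂ) (z : ℂ) : ℝ := Metric.infDist z Ωᶜ

/-- `Ω_r = {z ∈ Ω : δ_Ω(z) > r}`. -/
def interiorAtScale (Ω : Set ℂ) (r : ℝ) : Set ℂ := {z ∈ Ω | r < deltaO Ω z}

/-- `δ⁺_{Ω,p}(t) = min {t, inf{|z - (p+it)| : Re z ≥ Re p, z ∉ Ω}}` (the inner infimum being
`+∞` when the set is empty). -/
def deltaPlus (Ω : Set ℂ) (p : ℂ) (t : ℝ) : ℝ :=
  (min (ENNReal.ofReal t)
    (EMetric.infEdist (p + (t : ℂ) * Complex.I) {z : ℂ | p.re ≤ z.re ∧ z ∉ Ω})).toReal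

/-- `δ⁻_{Ω,p}(t) = min {t, inf{|z - (p+it)| : Re z ≤ Re p, z ∉ Ω}}`. -/
def deltaMinus (Ω : Set ℂ) (p : ℂ) (t : ℝ) : ℝ :=
  (min (ENNReal.ofReal t)
    (EMetric.infEdist (p + (t : ℂ) * Complex.I) {z : ℂ | z.re ≤ p.re ∧ z ∉ Ω})).toReal

/-- Non-tangential convergence of a sequence of the unit disc to a boundary point. -/
def NTSeqConv (z : ℕ → ℂ) (τ : ℂ) : Prop :=
  Tendsto z atTop (nhds τ) ∧
    ∃ M : ℝ, ∀ n : ℕ, ‖τ - z n‖ ≤ M * (1 - ‖z n‖)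

/-- Non-tangential limit `∠lim_{z→σ} g(z) = L` at a boundary point `σ` of the unit disc:
the limit holds along every Stolz region at `σ`. -/
def NTLim (g : ℂ → ℂ) (σ L : ℂ) : Prop :=
  ∀ M : ℝ, 0 < M →
    Tendsto g (nhdsWithin σ
      {z : ℂ | ‖z‖ < 1 ∧ ‖σ - z‖ ≤ M * (1 - ‖z‖)}) (nhds L)

/-- `τ` is the Denjoy–Wolff point of `g`. -/
def IsDW (g : ℂ → ℂ) (τ : ℂ) : Prop :=
  ‖τ‖ = 1 ∧
    TendstoLocallyUniformlyOn (fun n z => g^[n] z) (fun _ => τ) atTop unitDisc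

/-- Boundary regular fixed points with multiplier `A`. -/
def FixA (g : ℂ → ℂ) (A : ℝ) : Set ℂ :=
  {σ : ℂ | ‖σ‖ = 1 ∧ NTLim g σ σ ∧ NTLim (deriv g) σ (A : ℂ)}

/-- A univalent self-map of the unit disc. -/
def UnivalentSelfMap (f : ℂ → ℂ) : Prop :=
  DifferentiableOn ℂ f unitDisc ∧ Set.InjOn f unitDisc ∧ Set.MapsTo f unitDisc unitDisc

/-- Admissible base domains for the non-elliptic canonical model: a vertical strip,
a half-plane, or `ℂ`. -/
def IsKoenigsBase (Λ : Set ℂ) : Prop :=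
  (∃ a : ℝ, 0 < a ∧ Λ = {w : ℂ | 0 < w.re ∧ w.re < a}) ∨
  Λ = {w : ℂ | 0 < w.re} ∨ Λ = {w : ℂ | w.re < 0} ∨ Λ = Set.univ

/-- `h` is the Koenigs function of the non-elliptic univalent self-map `f`. -/
def IsKoenigsNonElliptic (f h : ℂ → ℂ) : Prop :=
  DifferentiableOn ℂ h unitDisc ∧ Set.InjOn h unitDisc ∧
  (∀ z ∈ unitDisc, h (f z) = h z + Complex.I) ∧
  IsKoenigsBase (⋃ n : ℕ, (fun w => w - (n : ℂ) * Complex.I) '' (h '' unitDisc))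

/-- `h` is the Koenigs function of the elliptic univalent self-map `f` with fixed point `z₀`
and `f'(z₀) = e^{-μ}`. -/
def IsKoenigsElliptic (f h : ℂ → ℂ) (z₀ μ : ℂ) : Prop :=
  z₀ ∈ unitDisc ∧ f z₀ = z₀ ∧ 0 ≤ μ.re ∧ deriv f z₀ = Complex.exp (-μ) ∧
  DifferentiableOn ℂ h unitDisc ∧ Set.InjOn h unitDisc ∧ h z₀ = 0 ∧
  ∀ z ∈ unitDisc, h (f z) = Complex.exp (-μ) * h z

/-- A Riemann map of the unit disc onto `S`. -/
def RiemannMapOnto (g : ℂ → ℂ) (S : Set ℂ) : Prop :=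
  DifferentiableOn ℂ g unitDisc ∧ Set.InjOn g unitDisc ∧ g '' unitDisc = S

/-- The μ-spirallike-fication of a domain. -/
def spirallikefication (μ : ℂ) (Ω : Set ℂ) : Set ℂ :=
  {z ∈ Ω | ∀ t : ℝ, 0 ≤ t → Complex.exp (-μ * t) * z ∈ Ω}

/-- `(φ_t)` is the semigroup-fication of the non-elliptic univalent self-map `f`:
`φ_t = (h*)⁻¹ ∘ (h* + it)` where `h*` is a Riemann map onto the starlike-fication of the
Koenigs domain of `f`. -/
def IsSemigroupficationNE (f : ℂ → ℂ) (φ : ℝ → ℂ → ℂ) : Prop :=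
  ∃ h hstar : ℂ → ℂ, IsKoenigsNonElliptic f h ∧
    RiemannMapOnto hstar (starlikefication (h '' unitDisc)) ∧
    ∀ t : ℝ, 0 ≤ t → ∀ z ∈ unitDisc,
      φ t z ∈ unitDisc ∧ hstar (φ t z) = hstar z + (t : ℂ) * Complex.I

/-- `(φ_t)` is the semigroup-fication of the elliptic univalent self-map `f`. -/
def IsSemigroupficationE (f : ℂ → ℂ) (φ : ℝ → ℂ → ℂ) : Prop :=
  ∃ h hstar : ℂ → ℂ, ∃ z₀ μ : ℂ, IsKoenigsElliptic f h z₀ μ ∧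
    RiemannMapOnto hstar (spirallikefication μ (h '' unitDisc)) ∧ hstar z₀ = 0 ∧
    ∀ t : ℝ, 0 ≤ t → ∀ z ∈ unitDisc,
      φ t z ∈ unitDisc ∧ hstar (φ t z) = Complex.exp (-μ * t) * hstar z

/-- `(φ_t)` is the semigroup-fication of the univalent self-map `f`. -/
def IsSemigroupfication (f : ℂ → ℂ) (φ : ℝ → ℂ → ℂ) : Prop :=
  IsSemigroupficationNE f φ ∨ IsSemigroupficationE f φ

/-- Elliptic self-map: has a fixed point in the unit disc. -/
def IsEllipticMap (f : ℂ → ℂ) : Prop := ∃ z₀ ∈ unitDisc, f z₀ = z₀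

/-- Hyperbolic self-map: non-elliptic with dilation coefficient `α < 1` at the
Denjoy–Wolff point. -/
def IsHyperbolicMap (f : ℂ → ℂ) : Prop :=
  ∃ τ : ℂ, IsDW f τ ∧ ∃ α : ℝ, 0 < α ∧ α < 1 ∧ NTLim (deriv f) τ (α : ℂ)

/-- Parabolic self-map: non-elliptic with dilation coefficient `1` at the Denjoy–Wolff point. -/
def IsParabolicMap (f : ℂ → ℂ) : Prop :=
  ∃ τ : ℂ, IsDW f τ ∧ NTLim (deriv f) τ 1

/-- Zero hyperbolic step. -/
def HasZeroHypStep (f : ℂ → ℂ) : Prop :=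
  ∀ z ∈ unitDisc, ∀ w ∈ unitDisc,
    Tendsto (fun n => hypDist unitDisc (f^[n] z) (f^[n] w)) atTop (nhds 0)

/-- Parabolic of zero hyperbolic step. -/
def IsParabolicZeroStep (f : ℂ → ℂ) : Prop := IsParabolicMap f ∧ HasZeroHypStep f

/-- Parabolic of positive hyperbolic step. -/
def IsParabolicPosStep (f : ℂ → ℂ) : Prop := IsParabolicMap f ∧ ¬ HasZeroHypStep f

/-- The curve `σ(t) = (δ⁺_{Ω*,0}(t) - δ⁻_{Ω*,0}(t))/2 + it`. -/
def sigmaCurve (Ω : Set ℂ) (t : ℝ) : ℂ :=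
  (((deltaPlus (starlikefication Ω) 0 t - deltaMinus (starlikefication Ω) 0 t) / 2 : ℝ) : ℂ) +
    (t : ℂ) * Complex.I

/-
Openness puts a small vertical segment `z + i(-ε, ε)` inside `Ω`, so if `τ_z` were
`0` the vertical ray through `z` would already lie in `Ω` from height `-ε/2` on, forcing `τ_z < 0`.
For the other two claims, invariance under `w ↦ w + i` spreads a vertical segment of length one
in `Ω` to the whole upward ray above it: if `z + i[-1/2, 1/2] ⊆ Ω` then `τ_z ≤ -1/2`. Such a segment
lies in `Ω` when `δ_Ω(z) > 1/2`, and it must meet `ℂ \ Ω` when `τ_z > 0`.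
-/

lemma dist_add_ofReal_mul_I_self (z : ℂ) (s : ℝ) : dist (z + s * I) z = |s| := by
  simp

section VerticalRays

variable {Ω : Set ℂ} {z : ℂ}

lemma tauZ_le_of_forall_mem {x : ℝ} (h : ∀ r : ℝ, x < r → z + r * I ∈ Ω) :
    tauZ Ω z ≤ x :=
  sInf_le ⟨x, rfl, h⟩

lemma exists_forall_mem_of_tauZ_lt {x : ℝ} (h : tauZ Ω z < x) :
    ∃ y : ℝ, y < x ∧ ∀ r : ℝ, y < r → z + r * I ∈ Ω := by
  obtain ⟨_, ⟨y, rfl, hy⟩, hyx⟩ := sInf_lt_iff.mp h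
  exact ⟨y, EReal.coe_lt_coe_iff.mp hyx, hy⟩

lemma tauZ_lt_zero_of_ball_subset {ε : ℝ} (hε : 0 < ε) (hball : Metric.ball z ε ⊆ Ω)
    (hτ : tauZ Ω z < ε) : tauZ Ω z < 0 := by
  obtain ⟨y, hyε, hy⟩ := exists_forall_mem_of_tauZ_lt hτ
  have hray : ∀ r : ℝ, -(ε / 2) < r → z + r * I ∈ Ω := by
    intro r hr
    rcases lt_or_ge y r with hyr | hry
    · exact hy r hyr
    · apply hball
      rw [Metric.mem_ball, dist_add_ofReal_mul_I_self, abs_lt]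
      constructor <;> linarith
  calc tauZ Ω z ≤ ((-(ε / 2) : ℝ) : EReal) := tauZ_le_of_forall_mem hray
    _ < 0 := EReal.coe_lt_coe_iff.mpr (by linarith)

theorem tauZ_ne_zero (hΩ : IsOpen Ω) (hz : z ∈ Ω) : tauZ Ω z ≠ 0 := by
  obtain ⟨ε, hε, hball⟩ := Metric.isOpen_iff.mp hΩ z hz
  intro h
  have := tauZ_lt_zero_of_ball_subset hε hball (h ▸ EReal.coe_pos.mpr hε)
  exact this.ne h

variable (hup : ∀ w ∈ Ω, w + I ∈ Ω)
include hup

lemma add_natCast_mul_I_mem {w : ℂ} (hw : w ∈ Ω) (n : ℕ) : w + n * I ∈ Ω := by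
  induction n with
  | zero => simpa using hw
  | succ n ih => simpa [add_mul, add_assoc] using hup _ ih

lemma add_mul_I_mem_of_Icc_subset {a : ℝ} (hseg : ∀ s ∈ Icc a (a + 1), z + s * I ∈ Ω)
    {r : ℝ} (hr : a ≤ r) : z + r * I ∈ Ω := by
  have hs : r - ⌊r - a⌋₊ ∈ Icc a (a + 1) :=
    ⟨by linarith [Nat.floor_le (sub_nonneg.mpr hr)], by linarith [Nat.lt_floor_add_one (r - a)]⟩
  convert add_natCast_mul_I_mem hup (hseg _ hs) ⌊r - a⌋₊ using 1
  push_cast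
  ring

lemma tauZ_le_of_Icc_subset {a : ℝ} (hseg : ∀ s ∈ Icc a (a + 1), z + s * I ∈ Ω) :
    tauZ Ω z ≤ a :=
  tauZ_le_of_forall_mem fun _ hr => add_mul_I_mem_of_Icc_subset hup hseg hr.le

lemma tauZ_lt_zero_of_segment_subset (hseg : ∀ s : ℝ, |s| ≤ 1 / 2 → z + s * I ∈ Ω) :
    tauZ Ω z < 0 :=
  calc tauZ Ω z ≤ ((-(1 / 2) : ℝ) : EReal) :=
        tauZ_le_of_Icc_subset hup fun s hs => hseg s (abs_le.mpr ⟨hs.1, by linarith [hs.2]⟩)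
    _ < 0 := EReal.coe_lt_coe_iff.mpr (by norm_num)

end VerticalRays

theorem tau_properties_general
    (Ω : Set ℂ) (hdom : IsPlaneDomain Ω)
    (hAS : AsympStarlike Ω) (z : ℂ) (hz : z ∈ Ω) :
    tauZ Ω z ≠ 0 ∧
    (1 / 2 < deltaO Ω z → tauZ Ω z < 0) ∧
    (0 < tauZ Ω z →
      ∃ p : ℂ, p ∉ Ω ∧ p.re = z.re ∧ ‖z - p‖ ≤ 1 / 2) := by
  refine ⟨tauZ_ne_zero hdom.1 hz, fun hδ => ?_, fun hτ => ?_⟩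
  · refine tauZ_lt_zero_of_segment_subset hAS.1 fun s hs => ?_
    apply Metric.ball_infDist_compl_subset
    rw [Metric.mem_ball, dist_add_ofReal_mul_I_self]
    exact hs.trans_lt hδ
  · by_contra! hfar
    refine hτ.not_gt (tauZ_lt_zero_of_segment_subset hAS.1 fun s hs => ?_)
    by_contra hout
    have := hfar _ hout (by simp)
    rw [← dist_eq, dist_comm, dist_add_ofReal_mul_I_self] at this
    linarith

/-- **Lemma.** Let `Ω ⊊ ℂ` be a domain asymptotically starlike at infinity and `z ∈ Ω`.
Then (1) `τ_z ≠ 0`; (2) if `δ_Ω(z) > 1/2` then `τ_z < 0`; (3) if `τ_z > 0` then there exists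
`p ∉ Ω` with `Re p = Re z` and `|z - p| ≤ 1/2`. -/
theorem tau_properties
    (Ω : Set ℂ) (hdom : IsPlaneDomain Ω) (hne : Ω ≠ Set.univ)
    (hAS : AsympStarlike Ω) (z : ℂ) (hz : z ∈ Ω) :
    tauZ Ω z ≠ 0 ∧
    (1 / 2 < deltaO Ω z → tauZ Ω z < 0) ∧
    (0 < tauZ Ω z →
      ∃ p : ℂ, p ∉ Ω ∧ p.re = z.re ∧ ‖z - p‖ ≤ 1 / 2) :=
  tau_properties_general Ω hdom hAS z hz
end
end

section
/- Let Ω ⊊ ℂ be a domain asymptotically starlike at infinity and let Ω* := {z ∈ Ω : τ_z < 0} be its starlike-fication. Then Ω* is a non-empty, open, connected, simply connected subset of Ω which is starlike at infinity (Ω* + it ⊆ Ω* for all t ≥ 0), and ⋃_{n∈ℕ}(Ω − in) = ⋃_{t≥0}(Ω* − it). -/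
open Set Filter Complex MeasureTheory

noncomputable section

/-!
Since `Ω` is open and `Ω + i ⊆ Ω`, the open sets `Ω - in` increase with `n`; by compactness a
unit vertical segment over any point of the strip `(a,b) × ℝ` lies in one of them, so every
vertical line over the strip is eventually contained in `Ω`. Hence `Ω*` is open, projects onto
`(a,b)`, and meets every vertical line in an upward ray. A partition of unity gives a continuous
section `x ↦ x + iψ(x)` of `Re : Ω* → (a,b)`, and vertical straight-line homotopies make it a
homotopy inverse of `Re`; so `Ω*` is homotopy equivalent to an interval, hence contractible.
-/

open Topology

section VerticalTranslation

variable {Ω : Set ℂ}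

theorem add_nat_mul_I_mem (hup : ∀ z ∈ Ω, z + I ∈ Ω) {z : ℂ} (hz : z ∈ Ω) (n : ℕ) :
    z + (n : ℂ) * I ∈ Ω := by
  induction n with
  | zero => simpa using hz
  | succ n ih => simpa [add_mul, add_assoc] using hup _ ih

theorem add_nat_mul_I_mem_of_le (hup : ∀ z ∈ Ω, z + I ∈ Ω) {z : ℂ} {m n : ℕ}
    (hm : z + (m : ℂ) * I ∈ Ω) (hmn : m ≤ n) : z + (n : ℂ) * I ∈ Ω := by
  obtain ⟨k, rfl⟩ := Nat.exists_eq_add_of_le hmn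
  simpa [add_mul, add_assoc] using add_nat_mul_I_mem hup hm k

theorem mem_iUnion_sub_nat_mul_I_iff {w : ℂ} :
    w ∈ ⋃ n : ℕ, (fun z => z - (n : ℂ) * I) '' Ω ↔ ∃ n : ℕ, w + (n : ℂ) * I ∈ Ω := by
  simp [sub_eq_iff_eq_add]

theorem add_mul_I_mem_of_forall_mem_Icc (hup : ∀ z ∈ Ω, z + I ∈ Ω) {z : ℂ} {c r : ℝ}
    (h : ∀ s ∈ Icc c (c + 1), z + (s : ℂ) * I ∈ Ω) (hcr : c ≤ r) : z + (r : ℂ) * I ∈ Ω := by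
  have hfloor := Nat.floor_le (sub_nonneg.2 hcr)
  have hfloor' := Nat.lt_floor_add_one (r - c)
  convert add_nat_mul_I_mem hup (h (r - ⌊r - c⌋₊) ⟨by linarith, by linarith⟩) ⌊r - c⌋₊ using 1
  push_cast
  ring

/-- The sets `Ω - in` are open and increase with `n`, so one of them already covers `K`. -/
theorem IsCompact.exists_nat_forall_add_mul_I_mem (hΩ : IsOpen Ω)
    (hup : ∀ z ∈ Ω, z + I ∈ Ω) {K : Set ℂ} (hK : IsCompact K)
    (hKΩ : K ⊆ ⋃ n : ℕ, (fun z => z - (n : ℂ) * I) '' Ω) :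
    ∃ N : ℕ, ∀ z ∈ K, z + (N : ℂ) * I ∈ Ω :=
  hK.elim_directed_cover (fun n : ℕ => (fun z => z + (n : ℂ) * I) ⁻¹' Ω)
    (fun _ => hΩ.preimage (by fun_prop))
    (fun _ hz => mem_iUnion.2 (mem_iUnion_sub_nat_mul_I_iff.1 (hKΩ hz)))
    (Monotone.directed_le fun _ _ hmn _ hz => add_nat_mul_I_mem_of_le hup hz hmn)

theorem exists_forall_ge_add_mul_I_mem (hΩ : IsOpen Ω) (hup : ∀ z ∈ Ω, z + I ∈ Ω) {z : ℂ}
    (hz : ∀ r : ℝ, z + (r : ℂ) * I ∈ ⋃ n : ℕ, (fun w => w - (n : ℂ) * I) '' Ω) :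
    ∃ α : ℝ, ∀ r : ℝ, α ≤ r → z + (r : ℂ) * I ∈ Ω := by
  obtain ⟨N, hN⟩ := (isCompact_Icc (a := (0 : ℝ)) (b := 1)).image
    (by fun_prop : Continuous fun r : ℝ => z + (r : ℂ) * I)
    |>.exists_nat_forall_add_mul_I_mem hΩ hup (by rintro _ ⟨r, -, rfl⟩; exact hz r)
  refine ⟨N, fun r hr => add_mul_I_mem_of_forall_mem_Icc hup (fun s hs => ?_) hr⟩
  convert hN _ ⟨s - N, ⟨by linarith [hs.1], by linarith [hs.2]⟩, rfl⟩ using 1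
  push_cast
  ring

end VerticalTranslation

section Starlikefication

variable {Ω : Set ℂ}

theorem mem_starlikefication_iff {z : ℂ} :
    z ∈ starlikefication Ω ↔ ∃ x : ℝ, x < 0 ∧ ∀ r : ℝ, x < r → z + (r : ℂ) * I ∈ Ω := by
  constructor
  · rintro ⟨-, hτ⟩
    obtain ⟨-, ⟨x, rfl, hx⟩, hx0⟩ := sInf_lt_iff.1 hτ
    exact ⟨x, EReal.coe_lt_coe_iff.1 hx0, hx⟩
  · rintro ⟨x, hx0, hx⟩
    exact ⟨by simpa using hx 0 hx0,
      sInf_lt_iff.2 ⟨x, ⟨x, rfl, hx⟩, EReal.coe_lt_coe_iff.2 hx0⟩⟩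

theorem add_mul_I_mem_starlikefication {z : ℂ} (hz : z ∈ starlikefication Ω) {t : ℝ}
    (ht : 0 ≤ t) : z + (t : ℂ) * I ∈ starlikefication Ω := by
  obtain ⟨x, hx0, hx⟩ := mem_starlikefication_iff.1 hz
  refine mem_starlikefication_iff.2 ⟨x, hx0, fun r hr => ?_⟩
  convert hx (t + r) (by linarith) using 1
  push_cast
  ring

theorem exists_add_mul_I_mem_starlikefication {z : ℂ} {α : ℝ}
    (h : ∀ r : ℝ, α ≤ r → z + (r : ℂ) * I ∈ Ω) :
    ∃ t : ℝ, 0 ≤ t ∧ z + (t : ℂ) * I ∈ starlikefication Ω := by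
  refine ⟨max 0 (α + 1), le_max_left _ _, mem_starlikefication_iff.2 ⟨-1, by norm_num,
    fun r hr => ?_⟩⟩
  convert h (max 0 (α + 1) + r) (by linarith [le_max_right 0 (α + 1)]) using 1
  push_cast
  ring

theorem sub_mul_I_mem_iUnion_of_mem_starlikefication {z : ℂ} (hz : z ∈ starlikefication Ω)
    (t : ℝ) : z - (t : ℂ) * I ∈ ⋃ n : ℕ, (fun w => w - (n : ℂ) * I) '' Ω := by
  obtain ⟨x, hx0, hx⟩ := mem_starlikefication_iff.1 hz
  refine mem_iUnion_sub_nat_mul_I_iff.2 ⟨⌈t⌉₊, ?_⟩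
  convert hx (⌈t⌉₊ - t) (by linarith [Nat.le_ceil t]) using 1
  push_cast
  ring

theorem isOpen_starlikefication (hΩ : IsOpen Ω) (hup : ∀ z ∈ Ω, z + I ∈ Ω) :
    IsOpen (starlikefication Ω) := by
  refine isOpen_iff_mem_nhds.2 fun z hz => ?_
  obtain ⟨x, hx0, hx⟩ := mem_starlikefication_iff.1 hz
  have hnear : ∀ᶠ w in 𝓝 z, ∀ s ∈ Icc (x / 2) (x / 2 + 1), w + (s : ℂ) * I ∈ Ω :=
    have hcont : Continuous fun p : ℂ × ℝ => p.1 + (p.2 : ℂ) * I := by fun_prop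
    isCompact_Icc.eventually_forall_of_forall_eventually (x₀ := z)
      (P := fun (w : ℂ) (s : ℝ) => w + (s : ℂ) * I ∈ Ω) fun s hs =>
        hcont.continuousAt.preimage_mem_nhds (hΩ.mem_nhds (hx s (by linarith [hs.1])))
  filter_upwards [hnear] with w hw
  exact mem_starlikefication_iff.2 ⟨x / 2, by linarith,
    fun r hr => add_mul_I_mem_of_forall_mem_Icc hup hw hr.le⟩

end Starlikefication

section StarlikeAtInfinity

variable {O : Set ℂ}

theorem convex_setOf_add_mul_I_mem (hup : ∀ z ∈ O, ∀ t : ℝ, 0 ≤ t → z + (t : ℂ) * I ∈ O)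
    (z : ℂ) : Convex ℝ {s : ℝ | z + (s : ℂ) * I ∈ O} := by
  refine convex_iff_ordConnected.2 ⟨fun s hs _ _ u hu => ?_⟩
  show z + (u : ℂ) * I ∈ O
  convert hup _ hs (u - s) (sub_nonneg.2 hu.1) using 1
  push_cast
  ring

theorem exists_continuous_forall_add_mul_I_mem (hO : IsOpen O)
    (hup : ∀ z ∈ O, ∀ t : ℝ, 0 ≤ t → z + (t : ℂ) * I ∈ O) :
    ∃ ψ : C(re '' O, ℝ), ∀ x : re '' O, ((x : ℝ) : ℂ) + (ψ x : ℂ) * I ∈ O := by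
  refine exists_continuous_forall_mem_convex_of_local_const
    (fun x => convex_setOf_add_mul_I_mem hup _) fun ⟨_, z, hz, hzx⟩ => ⟨z.im, ?_⟩
  have hcont : Continuous fun x : re '' O => ((x : ℝ) : ℂ) + (z.im : ℂ) * I := by fun_prop
  refine hcont.continuousAt.preimage_mem_nhds (hO.mem_nhds ?_)
  simpa [← hzx] using hz

theorem ContractibleSpace.of_isOpen_of_forall_add_mul_I_mem (hO : IsOpen O)
    (hup : ∀ z ∈ O, ∀ t : ℝ, 0 ≤ t → z + (t : ℂ) * I ∈ O) (hre : Convex ℝ (re '' O))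
    (hne : O.Nonempty) : ContractibleSpace O := by
  obtain ⟨ψ, hψ⟩ := exists_continuous_forall_add_mul_I_mem hO hup
  have := hre.contractibleSpace (hne.image re)
  let proj : C(O, re '' O) := ⟨fun z => ⟨(z : ℂ).re, mem_image_of_mem re z.2⟩, by fun_prop⟩
  let sect : C(re '' O, O) := ⟨fun x : re '' O => ⟨(x : ℝ) + (ψ x : ℂ) * I, hψ x⟩, by fun_prop⟩
  have hproj : proj.comp sect = ContinuousMap.id _ := by
    ext x
    simp [proj, sect]
  have hmem : ∀ (t : unitInterval) (z : O), ((z : ℂ).re : ℂ) +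
      (((1 - t) * ψ (proj z) + t * (z : ℂ).im : ℝ) : ℂ) * I ∈ O := fun t z =>
    convex_setOf_add_mul_I_mem hup _ (hψ (proj z))
      (show ((z : ℂ).re : ℂ) + ((z : ℂ).im : ℂ) * I ∈ O by rw [re_add_im]; exact z.2)
      (sub_nonneg.2 t.2.2) t.2.1 (sub_add_cancel 1 _)
  let H : (sect.comp proj).Homotopy (ContinuousMap.id O) :=
    { toFun := fun p => ⟨_, hmem p.1 p.2⟩
      continuous_toFun := by fun_prop
      map_zero_left := fun z => by ext1; simp [proj, sect]
      map_one_left := fun z => by ext1; simp }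
  exact ContinuousMap.HomotopyEquiv.contractibleSpace ⟨proj, sect, ⟨H⟩, hproj ▸ .refl _⟩

end StarlikeAtInfinity

theorem starlikefication_properties_general
    (Ω : Set ℂ) (hdom : IsPlaneDomain Ω)
    (hAS : AsympStarlike Ω) :
    (starlikefication Ω).Nonempty ∧
    IsOpen (starlikefication Ω) ∧
    IsConnected (starlikefication Ω) ∧
    SimplyConnectedSpace ↥(starlikefication Ω) ∧
    starlikefication Ω ⊆ Ω ∧
    (∀ t : ℝ, 0 ≤ t → ∀ z ∈ starlikefication Ω,
      z + (t : ℂ) * Complex.I ∈ starlikefication Ω) ∧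
    (⋃ n : ℕ, (fun z => z - (n : ℂ) * Complex.I) '' Ω) =
      {w : ℂ | ∃ z ∈ starlikefication Ω, ∃ t : ℝ, 0 ≤ t ∧ w = z - (t : ℂ) * Complex.I} := by
  obtain ⟨hup, a, b, hab, hstrip⟩ := hAS
  have hlift : ∀ z : ℂ, a < (z.re : EReal) → (z.re : EReal) < b →
      ∃ t : ℝ, 0 ≤ t ∧ z + (t : ℂ) * I ∈ starlikefication Ω := fun z ha hb =>
    have ⟨_, hα⟩ := exists_forall_ge_add_mul_I_mem hdom.1 hup fun r => by
      rw [hstrip]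
      simpa using ⟨ha, hb⟩
    exists_add_mul_I_mem_starlikefication hα
  have hre : re '' starlikefication Ω = {x : ℝ | a < (x : EReal) ∧ (x : EReal) < b} := by
    refine Subset.antisymm ?_ fun x hx => ?_
    · rintro _ ⟨z, hz, rfl⟩
      have hz' := mem_iUnion_sub_nat_mul_I_iff.2 ⟨0, by simpa using hz.1⟩
      rwa [hstrip] at hz'
    · obtain ⟨t, -, ht⟩ := hlift x (by simpa using hx.1) (by simpa using hx.2)
      exact ⟨_, ht, by simp⟩
  have hne : (starlikefication Ω).Nonempty :=
    (hre ▸ EReal.lt_iff_exists_real_btwn.1 hab : (re '' starlikefication Ω).Nonempty).of_image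
  have hopen := isOpen_starlikefication hdom.1 hup
  have := ContractibleSpace.of_isOpen_of_forall_add_mul_I_mem hopen
    (fun _ hz _ ht => add_mul_I_mem_starlikefication hz ht)
    (hre ▸ (ordConnected_Ioo.preimage_mono EReal.coe_strictMono.monotone).convex) hne
  refine ⟨hne, hopen, isConnected_iff_connectedSpace.2 inferInstance, inferInstance,
    fun _ hz => hz.1, fun t ht z hz => add_mul_I_mem_starlikefication hz ht, ?_⟩
  ext w
  refine ⟨fun hw => ?_, ?_⟩
  · obtain ⟨t, ht, hwt⟩ := hlift w (hstrip ▸ hw).1 (hstrip ▸ hw).2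
    exact ⟨_, hwt, t, ht, by ring⟩
  · rintro ⟨z, hz, t, -, rfl⟩
    exact sub_mul_I_mem_iUnion_of_mem_starlikefication hz t

/-- **Lemma.** If `Ω ⊊ ℂ` is a domain asymptotically starlike at infinity, then its
starlike-fication `Ω* = {z ∈ Ω : τ_z < 0}` is a non-empty, open, connected and simply
connected subset of `Ω`, it is starlike at infinity, and
`⋃_{n∈ℕ} (Ω - in) = ⋃_{t≥0} (Ω* - it)`. -/
theorem starlikefication_properties
    (Ω : Set ℂ) (hdom : IsPlaneDomain Ω) (hne : Ω ≠ Set.univ)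
    (hAS : AsympStarlike Ω) :
    (starlikefication Ω).Nonempty ∧
    IsOpen (starlikefication Ω) ∧
    IsConnected (starlikefication Ω) ∧
    SimplyConnectedSpace ↥(starlikefication Ω) ∧
    starlikefication Ω ⊆ Ω ∧
    (∀ t : ℝ, 0 ≤ t → ∀ z ∈ starlikefication Ω,
      z + (t : ℂ) * Complex.I ∈ starlikefication Ω) ∧
    (⋃ n : ℕ, (fun z => z - (n : ℂ) * Complex.I) '' Ω) =
      {w : ℂ | ∃ z ∈ starlikefication Ω, ∃ t : ℝ, 0 ≤ t ∧ w = z - (t : ℂ) * Complex.I} :=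
  starlikefication_properties_general Ω hdom hAS
end
end

section
/- Let Ω ⊊ ℂ be a domain asymptotically starlike at infinity of parabolic type such that 0 ∉ Ω and it ∈ Ω for all t > 0. Then for every t > 0, δ^±_{Ω*,0}(t) ≤ δ^±_{Ω,0}(t) ≤ δ^±_{Ω*,0}(t) + 1/2 (for both the + and the − functions). In particular, for the curve σ(t) := (δ⁺_{Ω*,0}(t) − δ⁻_{Ω*,0}(t))/2 + it one has δ_Ω(σ(t)) → +∞ as t → +∞. -/
/-!
Every point of `ℂ \ Ω*` lies within vertical distance `1/2` of a point of `ℂ \ Ω`: if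
`z ∈ Ω \ Ω*`, some `z + ir` with `r > -1/2` lies outside `Ω`, hence so does
`z + i(r - round r)` because `Ω + i ⊆ Ω`. Together with `Ω* ⊆ Ω` this compares `δ^±`.

For the divergence, parabolic type means that `⋃ₙ (Ω - in)` contains a closed half-plane
`{Re z ≤ 0}` or `{Re z ≥ 0}`. The open sets `Ω - in` increase with `n`, so by compactness each
unit-height rectangle `[-R, R] × [0, 1]` inside it is contained in a single one; hence the
half-strip `[-R, R] × [T, ∞)` lies in `Ω*` for large `T`, and `δ^∓_{Ω*,0}(t) → ∞`. Finally
`σ(t)` is at distance at least `(δ⁺_{Ω*,0}(t) + δ⁻_{Ω*,0}(t))/4` from `ℂ \ Ω* ⊇ ℂ \ Ω`.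
-/

open Set Filter Complex MeasureTheory

noncomputable section

open Metric

-- `δ^±_{D,p}(t)` is this quantity for the part of `ℂ \ D` on one side of `Re p`.
def cappedInfDist {α : Type*} [PseudoMetricSpace α] (S : Set α) (q : α) (t : ℝ) : ℝ :=
  (min (ENNReal.ofReal t) (infEDist q S)).toReal

section CappedInfDist

variable {α : Type*} [PseudoMetricSpace α] {S S' : Set α} {q : α} {t : ℝ}

theorem cappedInfDist_nonneg : 0 ≤ cappedInfDist S q t := ENNReal.toReal_nonneg

theorem min_ofReal_infEDist_ne_top : min (ENNReal.ofReal t) (infEDist q S) ≠ ⊤ :=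
  ne_top_of_le_ne_top ENNReal.ofReal_ne_top (min_le_left _ _)

theorem cappedInfDist_anti (h : S ⊆ S') : cappedInfDist S' q t ≤ cappedInfDist S q t :=
  ENNReal.toReal_mono min_ofReal_infEDist_ne_top (min_le_min le_rfl (infEDist_anti h))

theorem cappedInfDist_le_dist {z : α} (hz : z ∈ S) : cappedInfDist S q t ≤ dist q z := by
  rw [dist_edist]
  exact ENNReal.toReal_mono (edist_ne_top q z)
    ((min_le_right _ _).trans (infEDist_le_edist_of_mem hz))

theorem le_cappedInfDist {R : ℝ} (hR : R ≤ t) (h : ∀ z ∈ S, R ≤ dist q z) :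
    R ≤ cappedInfDist S q t := by
  refine (ENNReal.ofReal_le_iff_le_toReal min_ofReal_infEDist_ne_top).1
    (le_min (ENNReal.ofReal_le_ofReal hR) (le_infEDist.2 fun z hz => ?_))
  rw [edist_dist]
  exact ENNReal.ofReal_le_ofReal (h z hz)

theorem cappedInfDist_le_add {ε : ℝ} (hε : 0 ≤ ε)
    (h : ∀ z ∈ S', ∃ w ∈ S, dist z w ≤ ε) :
    cappedInfDist S q t ≤ cappedInfDist S' q t + ε := by
  have key : infEDist q S ≤ infEDist q S' + ENNReal.ofReal ε := by
    refine tsub_le_iff_right.1 (le_infEDist.2 fun z hz => tsub_le_iff_right.2 ?_)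
    obtain ⟨w, hw, hzw⟩ := h z hz
    calc infEDist q S ≤ edist q w := infEDist_le_edist_of_mem hw
      _ ≤ edist q z + edist z w := edist_triangle _ _ _
      _ ≤ edist q z + ENNReal.ofReal ε := by
        rw [edist_dist z w]; gcongr
  have hmin : min (ENNReal.ofReal t) (infEDist q S) ≤
      min (ENNReal.ofReal t) (infEDist q S') + ENNReal.ofReal ε := by
    rw [← min_add_add_right]
    exact min_le_min le_self_add key
  simpa [cappedInfDist, ENNReal.toReal_ofReal hε] using
    ENNReal.toReal_le_add' hmin (absurd · min_ofReal_infEDist_ne_top)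
      (absurd · ENNReal.ofReal_ne_top)

end CappedInfDist

section Starlikefication

variable {Ω : Set ℂ}

theorem monotone_preimage_add_natCast_mul_I (hplus : ∀ z ∈ Ω, z + I ∈ Ω) :
    Monotone fun n : ℕ => (· + n * I) ⁻¹' Ω :=
  monotone_nat_of_le_succ fun n w hw => by
    simpa [add_mul, add_assoc] using hplus _ hw

theorem mem_starlikefication_of_forall {z : ℂ} {x : ℝ} (hx : x < 0)
    (h : ∀ r : ℝ, x < r → z + r * I ∈ Ω) : z ∈ starlikefication Ω :=
  ⟨by simpa using h 0 hx,
    (sInf_le ⟨x, rfl, h⟩ : tauZ Ω z ≤ x).trans_lt (by exact_mod_cast hx)⟩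

theorem exists_abs_le_half_add_mul_I_notMem (hplus : ∀ z ∈ Ω, z + I ∈ Ω) {z : ℂ}
    (hz : z ∉ starlikefication Ω) : ∃ r : ℝ, |r| ≤ 1 / 2 ∧ z + r * I ∉ Ω := by
  by_contra! hnear
  refine hz (mem_starlikefication_of_forall (x := -(1 / 2)) (by norm_num) fun r hr => ?_)
  -- shift `z + r i` down by `round r`, which is a natural number since `r > -1/2`
  have hround : 0 ≤ round r := by rw [round_eq]; exact Int.floor_nonneg.2 (by linarith)
  obtain ⟨n, hn⟩ := Int.eq_ofNat_of_zero_le hround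
  have hshift : z + ((r - n : ℝ) : ℂ) * I ∈ (· + (0 : ℕ) * I) ⁻¹' Ω := by
    simpa using hnear (r - n) (by simpa [hn] using abs_sub_round r)
  simpa [sub_mul, add_assoc] using
    monotone_preimage_add_natCast_mul_I hplus (Nat.zero_le n) hshift

theorem cappedInfDist_le_starlikefication_add_half (hplus : ∀ z ∈ Ω, z + I ∈ Ω)
    (P : ℝ → Prop) (q : ℂ) (t : ℝ) :
    cappedInfDist {z | P z.re ∧ z ∉ Ω} q t ≤
      cappedInfDist {z | P z.re ∧ z ∉ starlikefication Ω} q t + 1 / 2 := by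
  refine cappedInfDist_le_add (by norm_num) fun z ⟨hP, hz⟩ => ?_
  obtain ⟨r, hr, hrΩ⟩ := exists_abs_le_half_add_mul_I_notMem hplus hz
  exact ⟨z + r * I, ⟨by simpa using hP, hrΩ⟩, by simpa [dist_self_add_right] using hr⟩

theorem compl_subset_compl_starlikefication : Ωᶜ ⊆ (starlikefication Ω)ᶜ :=
  compl_subset_compl.2 (sep_subset _ _)

theorem deltaPlus_starlikefication_le (p : ℂ) (t : ℝ) :
    deltaPlus (starlikefication Ω) p t ≤ deltaPlus Ω p t :=
  cappedInfDist_anti fun _ hz => ⟨hz.1, compl_subset_compl_starlikefication hz.2⟩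

theorem deltaMinus_starlikefication_le (p : ℂ) (t : ℝ) :
    deltaMinus (starlikefication Ω) p t ≤ deltaMinus Ω p t :=
  cappedInfDist_anti fun _ hz => ⟨hz.1, compl_subset_compl_starlikefication hz.2⟩

theorem deltaPlus_le_starlikefication_add_half (hplus : ∀ z ∈ Ω, z + I ∈ Ω)
    (p : ℂ) (t : ℝ) : deltaPlus Ω p t ≤ deltaPlus (starlikefication Ω) p t + 1 / 2 :=
  cappedInfDist_le_starlikefication_add_half hplus (p.re ≤ ·) _ t

theorem deltaMinus_le_starlikefication_add_half (hplus : ∀ z ∈ Ω, z + I ∈ Ω)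
    (p : ℂ) (t : ℝ) : deltaMinus Ω p t ≤ deltaMinus (starlikefication Ω) p t + 1 / 2 :=
  cappedInfDist_le_starlikefication_add_half hplus (· ≤ p.re) _ t

end Starlikefication

section Strip

variable {Ω : Set ℂ} {a b : EReal}

theorem exists_add_natCast_mul_I_mem_of_strip
    (hstrip : (⋃ n : ℕ, (fun z => z - (n : ℂ) * I) '' Ω) =
      {z : ℂ | a < (z.re : EReal) ∧ (z.re : EReal) < b})
    {w : ℂ} (ha : a < w.re) (hb : w.re < b) : ∃ n : ℕ, w + n * I ∈ Ω := by
  have hw : w ∈ ⋃ n : ℕ, (fun z => z - (n : ℂ) * I) '' Ω := hstrip ▸ ⟨ha, hb⟩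
  obtain ⟨n, v, hv, rfl⟩ := mem_iUnion.1 hw
  exact ⟨n, by simpa using hv⟩

theorem re_mem_strip_of_mem
    (hstrip : (⋃ n : ℕ, (fun z => z - (n : ℂ) * I) '' Ω) =
      {z : ℂ | a < (z.re : EReal) ∧ (z.re : EReal) < b})
    {z : ℂ} (hz : z ∈ Ω) : a < z.re ∧ z.re < b := by
  have hz' : z ∈ ⋃ n : ℕ, (fun z => z - (n : ℂ) * I) '' Ω :=
    mem_iUnion.2 ⟨0, z, hz, by simp⟩
  rwa [hstrip] at hz'

end Strip

section Growth

variable {Ω : Set ℂ}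

theorem exists_forall_ge_add_natCast_mul_I_mem (hopen : IsOpen Ω)
    (hplus : ∀ z ∈ Ω, z + I ∈ Ω) {K : Set ℂ} (hK : IsCompact K)
    (hreach : ∀ w ∈ K, ∃ n : ℕ, w + n * I ∈ Ω) :
    ∃ N : ℕ, ∀ w ∈ K, ∀ m : ℕ, N ≤ m → w + m * I ∈ Ω := by
  obtain ⟨N, hN⟩ := hK.elim_directed_cover (fun n : ℕ => (· + n * I) ⁻¹' Ω)
    (fun n => hopen.preimage (by fun_prop)) (fun w hw => mem_iUnion.2 (hreach w hw))
    (monotone_preimage_add_natCast_mul_I hplus).directed_le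
  exact ⟨N, fun w hw m hm => monotone_preimage_add_natCast_mul_I hplus hm (hN hw)⟩

theorem exists_forall_ge_im_mem_starlikefication (hopen : IsOpen Ω)
    (hplus : ∀ z ∈ Ω, z + I ∈ Ω) {H : Set ℝ} (hH : IsClosed H)
    (hreach : ∀ w : ℂ, w.re ∈ H → ∃ n : ℕ, w + n * I ∈ Ω) (R : ℝ) :
    ∃ T : ℝ, ∀ w : ℂ, w.re ∈ H → |w.re| ≤ R → T ≤ w.im →
      w ∈ starlikefication Ω := by
  obtain ⟨N, hN⟩ := exists_forall_ge_add_natCast_mul_I_mem hopen hplus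
    ((isCompact_Icc.inter_left hH).reProdIm (isCompact_Icc (a := (0 : ℝ)) (b := 1)))
    fun w hw => hreach w (mem_reProdIm.1 hw).1.1
  have hmem : ∀ w : ℂ, w.re ∈ H → |w.re| ≤ R → (N : ℝ) ≤ w.im → w ∈ Ω := by
    intro w hwH hwR hwN
    have him : 0 ≤ w.im := N.cast_nonneg.trans hwN
    -- `w` lies `⌊w.im⌋₊ ≥ N` unit steps above a point of the compact rectangle
    have hbase : w - ⌊w.im⌋₊ * I ∈ (H ∩ Icc (-R) R) ×ℂ Icc 0 1 := by
      refine mem_reProdIm.2 ⟨⟨by simpa using hwH, by simpa using abs_le.1 hwR⟩, ?_⟩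
      simpa [add_comm] using ⟨Nat.floor_le him, (Nat.lt_floor_add_one w.im).le⟩
    simpa using hN _ hbase _ (Nat.le_floor hwN)
  refine ⟨N + 1, fun w hwH hwR hwT =>
    mem_starlikefication_of_forall (x := -1) (by norm_num) fun r hr =>
      hmem _ (by simpa using hwH) (by simpa using hwR) ?_⟩
  simp only [add_im, ofReal_im, mul_im, ofReal_re, I_im, mul_one, I_re, mul_zero, add_zero]
  linarith

theorem le_dist_of_forall_ge_im_mem {D : Set ℂ} {H : Set ℝ} {R T t : ℝ}
    (hrect : ∀ w : ℂ, w.re ∈ H → |w.re| ≤ R → T ≤ w.im → w ∈ D) {w : ℂ}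
    (hwH : w.re ∈ H) (hwD : w ∉ D) (ht : T + R ≤ t) : R ≤ dist ((t : ℂ) * I) w := by
  by_contra! hlt
  have hdist := abs_re_le_norm ((t : ℂ) * I - w)
  have hdist' := abs_im_le_norm ((t : ℂ) * I - w)
  rw [← dist_eq] at hdist hdist'
  simp only [sub_re, mul_re, ofReal_re, I_re, mul_zero, ofReal_im, I_im, mul_one, sub_self,
    zero_sub, abs_neg, sub_im, mul_im, add_zero] at hdist hdist'
  exact hwD (hrect w hwH (by linarith) (by linarith [le_abs_self (t - w.im)]))

theorem tendsto_cappedInfDist_starlikefication (hopen : IsOpen Ω)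
    (hplus : ∀ z ∈ Ω, z + I ∈ Ω) {H : Set ℝ} (hH : IsClosed H)
    (hreach : ∀ w : ℂ, w.re ∈ H → ∃ n : ℕ, w + n * I ∈ Ω) :
    Tendsto (fun t : ℝ => cappedInfDist {z | z.re ∈ H ∧ z ∉ starlikefication Ω}
      ((0 : ℂ) + t * I) t) atTop atTop := by
  refine tendsto_atTop.2 fun R => ?_
  obtain ⟨T, hT⟩ := exists_forall_ge_im_mem_starlikefication hopen hplus hH hreach R
  filter_upwards [eventually_ge_atTop (max R (T + R))] with t ht
  refine le_cappedInfDist (le_of_max_le_left ht) fun w ⟨hwH, hw⟩ => ?_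
  rw [zero_add]
  exact le_dist_of_forall_ge_im_mem hT hwH hw (le_of_max_le_right ht)

theorem tendsto_deltaPlus_starlikefication (hopen : IsOpen Ω) (hplus : ∀ z ∈ Ω, z + I ∈ Ω)
    (hreach : ∀ w : ℂ, 0 ≤ w.re → ∃ n : ℕ, w + n * I ∈ Ω) :
    Tendsto (deltaPlus (starlikefication Ω) 0) atTop atTop :=
  tendsto_cappedInfDist_starlikefication (H := Ici 0) hopen hplus isClosed_Ici hreach

theorem tendsto_deltaMinus_starlikefication (hopen : IsOpen Ω) (hplus : ∀ z ∈ Ω, z + I ∈ Ω)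
    (hreach : ∀ w : ℂ, w.re ≤ 0 → ∃ n : ℕ, w + n * I ∈ Ω) :
    Tendsto (deltaMinus (starlikefication Ω) 0) atTop atTop :=
  tendsto_cappedInfDist_starlikefication (H := Iic 0) hopen hplus isClosed_Iic hreach

end Growth

theorem dist_mul_I_le_dist_ofReal_add_mul_I {c t : ℝ} {w : ℂ} (hw : 0 ≤ w.re)
    (hc : c ≤ 0) : dist ((t : ℂ) * I) w ≤ dist ((c : ℂ) + t * I) w := by
  simp only [dist_eq_re_im, add_re, add_im, mul_re, mul_im, ofReal_re, ofReal_im, I_re, I_im]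
  exact Real.sqrt_le_sqrt (by nlinarith)

theorem dist_ofReal_neg_add_mul_I_neg_conj (c t : ℝ) (w : ℂ) :
    dist (((-c : ℝ) : ℂ) + t * I) (-(starRingEnd ℂ) w) = dist ((c : ℂ) + t * I) w := by
  simp only [dist_eq_re_im, add_re, add_im, mul_re, mul_im, ofReal_re, ofReal_im, I_re, I_im,
    neg_re, neg_im, conj_re, conj_im]
  ring_nf

theorem add_div_four_le_dist_of_re_nonneg {a b t : ℝ} {w : ℂ} (ha : 0 ≤ a) (hb : 0 ≤ b)
    (hw : 0 ≤ w.re) (haw : a ≤ dist ((t : ℂ) * I) w) :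
    (a + b) / 4 ≤ dist ((((a - b) / 2 : ℝ) : ℂ) + t * I) w := by
  set c := (a - b) / 2 with hc
  -- a shift towards `w` costs at most `c`; a shift away from it only increases the distance,
  -- which is then also at least `-c`
  rcases le_total 0 c with hc0 | hc0
  · have htri := dist_triangle ((t : ℂ) * I) ((c : ℂ) + t * I) w
    have hshift : dist ((t : ℂ) * I) ((c : ℂ) + t * I) = c := by
      simp [abs_of_nonneg hc0]
    linarith
  · have hre : |w.re - c| ≤ dist ((c : ℂ) + t * I) w := by
      rw [dist_comm, dist_eq]
      simpa using abs_re_le_norm (w - ((c : ℂ) + t * I))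
    linarith [le_abs_self (w.re - c), dist_mul_I_le_dist_ofReal_add_mul_I (t := t) hw hc0]

theorem add_div_four_le_deltaO (D : Set ℂ) (hD : Dᶜ.Nonempty) (t : ℝ) :
    (deltaPlus D 0 t + deltaMinus D 0 t) / 4 ≤
      deltaO D ((((deltaPlus D 0 t - deltaMinus D 0 t) / 2 : ℝ) : ℂ) + t * I) := by
  set a := deltaPlus D 0 t
  set b := deltaMinus D 0 t
  refine (le_infDist hD).2 fun w hw => ?_
  rcases le_total 0 w.re with hre | hre
  · have haw : a ≤ dist ((0 : ℂ) + t * I) w := cappedInfDist_le_dist ⟨hre, hw⟩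
    rw [zero_add] at haw
    exact add_div_four_le_dist_of_re_nonneg cappedInfDist_nonneg cappedInfDist_nonneg hre haw
  · have hbw : b ≤ dist ((0 : ℂ) + t * I) w := cappedInfDist_le_dist ⟨hre, hw⟩
    have hconj := dist_ofReal_neg_add_mul_I_neg_conj 0 t w
    rw [neg_zero, ofReal_zero, zero_add] at hconj
    rw [zero_add, ← hconj] at hbw
    have := add_div_four_le_dist_of_re_nonneg (a := b) (b := a) cappedInfDist_nonneg
      cappedInfDist_nonneg (by simpa using hre) hbw
    rwa [add_comm b, show (b - a) / 2 = -((a - b) / 2) by ring,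
      dist_ofReal_neg_add_mul_I_neg_conj] at this

theorem delta_starlikefication_comparison_general
    (Ω : Set ℂ) (hdom : IsPlaneDomain Ω)
    (hAS : AsympStarlikeParabolic Ω)
    (h0 : (0 : ℂ) ∉ Ω) (haxis : ∀ t : ℝ, 0 < t → (t : ℂ) * Complex.I ∈ Ω) :
    (∀ t : ℝ, 0 < t →
      (deltaPlus (starlikefication Ω) 0 t ≤ deltaPlus Ω 0 t ∧
        deltaPlus Ω 0 t ≤ deltaPlus (starlikefication Ω) 0 t + 1 / 2) ∧
      (deltaMinus (starlikefication Ω) 0 t ≤ deltaMinus Ω 0 t ∧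
        deltaMinus Ω 0 t ≤ deltaMinus (starlikefication Ω) 0 t + 1 / 2)) ∧
    Tendsto (fun t : ℝ => deltaO Ω (sigmaCurve Ω t)) atTop atTop := by
  obtain ⟨hplus, a, b, -, hpar, hstrip⟩ := hAS
  refine ⟨fun t _ => ⟨⟨deltaPlus_starlikefication_le 0 t,
    deltaPlus_le_starlikefication_add_half hplus 0 t⟩, ⟨deltaMinus_starlikefication_le 0 t,
    deltaMinus_le_starlikefication_add_half hplus 0 t⟩⟩, ?_⟩
  have ⟨ha, hb⟩ : a < (0 : ℝ) ∧ (0 : ℝ) < b := by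
    simpa using re_mem_strip_of_mem hstrip (haxis 1 one_pos)
  have hsum : Tendsto (fun t => deltaPlus (starlikefication Ω) 0 t +
      deltaMinus (starlikefication Ω) 0 t) atTop atTop := by
    rcases hpar with rfl | rfl
    · exact Tendsto.nonneg_add_atTop (fun _ => cappedInfDist_nonneg)
        (tendsto_deltaMinus_starlikefication hdom.1 hplus fun w hw =>
          exists_add_natCast_mul_I_mem_of_strip hstrip (EReal.bot_lt_coe _)
            (lt_of_le_of_lt (by exact_mod_cast hw) hb))
    · exact Tendsto.atTop_add_nonneg
        (tendsto_deltaPlus_starlikefication hdom.1 hplus fun w hw =>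
          exists_add_natCast_mul_I_mem_of_strip hstrip
            (lt_of_lt_of_le ha (by exact_mod_cast hw)) (EReal.coe_lt_top _))
        (fun _ => cappedInfDist_nonneg)
  refine tendsto_atTop_mono (fun t => ?_) (hsum.atTop_div_const four_pos)
  calc _ ≤ deltaO (starlikefication Ω) (sigmaCurve Ω t) :=
        add_div_four_le_deltaO _ ⟨0, fun h => h0 h.1⟩ t
    _ ≤ deltaO Ω (sigmaCurve Ω t) :=
        infDist_le_infDist_of_subset compl_subset_compl_starlikefication ⟨0, h0⟩

/-- **Lemma.** Let `Ω ⊊ ℂ` be a domain asymptotically starlike at infinity of parabolic type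
with `0 ∉ Ω` and `it ∈ Ω` for all `t > 0`. Then for every `t > 0`,
`δ^±_{Ω*,0}(t) ≤ δ^±_{Ω,0}(t) ≤ δ^±_{Ω*,0}(t) + 1/2`; in particular, for the curve
`σ(t) = (δ⁺_{Ω*,0}(t) − δ⁻_{Ω*,0}(t))/2 + it` one has `δ_Ω(σ(t)) → +∞` as `t → +∞`. -/
theorem delta_starlikefication_comparison
    (Ω : Set ℂ) (hdom : IsPlaneDomain Ω) (hne : Ω ≠ Set.univ)
    (hAS : AsympStarlikeParabolic Ω)
    (h0 : (0 : ℂ) ∉ Ω) (haxis : ∀ t : ℝ, 0 < t → (t : ℂ) * Complex.I ∈ Ω) :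
    (∀ t : ℝ, 0 < t →
      (deltaPlus (starlikefication Ω) 0 t ≤ deltaPlus Ω 0 t ∧
        deltaPlus Ω 0 t ≤ deltaPlus (starlikefication Ω) 0 t + 1 / 2) ∧
      (deltaMinus (starlikefication Ω) 0 t ≤ deltaMinus Ω 0 t ∧
        deltaMinus Ω 0 t ≤ deltaMinus (starlikefication Ω) 0 t + 1 / 2)) ∧
    Tendsto (fun t : ℝ => deltaO Ω (sigmaCurve Ω t)) atTop atTop :=
  delta_starlikefication_comparison_general Ω hdom hAS h0 haxis
end
end
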